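/- (d = 2 box duality, finite I) Let ν_1, ν_2 be Borel probability measures on ℝ, B = (−∞,B_1]×(−∞,B_2], and for i = 1,...,n let A^i = (−∞,A^i_1]×(−∞,A^i_2] with π̄^i ∈ [0,1]. Let Q_0 be the set of sub-probability measures μ on ℝ² with μ_1(E) ≤ ν_1(E), μ_2(E) ≤ ν_2(E) for all Borel E ⊆ ℝ and μ(A^i) ≤ π̄^i for all i. Then max_{μ ∈ Q_0} μ(B) = min( ν_1((−∞,B_1]), ν_2((−∞,B_2]), min_{i=1,...,n} { π̄^i + ν_1((A^i_1, B_1]) + ν_2((A^i_2, B_2]) } ), where intervals (a,b] with b ≤ a are empty. -/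

import Mathlib

/-!
`B` is covered by the box `A^i` and the strips `(A^i₁, B₁] × ℝ`, `ℝ × (A^i₂, B₂]`, so for every
admissible `μ` the marginal and box constraints give
`μ(B) ≤ π̄^i + ν₁((A^i₁, B₁]) + ν₂((A^i₂, B₂])`, and trivially `μ(B) ≤ ν₁((−∞, B₁])`, `μ(B) ≤ ν₂((−∞, B₂])`. Conversely, let `m` be the minimum
and couple the top mass `m` of `ν₁` below `B₁` with the top mass `m` of `ν₂` below `B₂`
countermonotonically, through the quantile functions. All of this mass lands in `B`, and a box
`A^i` only receives what is left of `m` once the two strips have been served, which is at most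
`π̄^i` because `m ≤ π̄^i + ν₁((A^i₁, B₁]) + ν₂((A^i₂, B₂])`.
-/

open MeasureTheory Set ProbabilityTheory

lemma volume_Iic_inter_Ioo_zero_one {c : ℝ} (hc : c ≤ 1) :
    volume (Iic c ∩ Ioo 0 1) = ENNReal.ofReal c := by
  refine le_antisymm ?_ ?_
  · calc volume (Iic c ∩ Ioo 0 1) ≤ volume (Ioc 0 c) := measure_mono fun t ht => ⟨ht.2.1, ht.1⟩
      _ = ENNReal.ofReal c := by rw [Real.volume_Ioc, sub_zero]
  · calc ENNReal.ofReal c = volume (Ioo 0 c) := by rw [Real.volume_Ioo, sub_zero]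
      _ ≤ volume (Iic c ∩ Ioo 0 1) :=
        measure_mono fun t ht => ⟨ht.2.le, ht.1, ht.2.trans_le hc⟩

namespace ProbabilityTheory

/-- Meaningful for `t ∈ (0, 1)`: for `t ≤ 0` the set is unbounded below, for `t > 1` it is
empty, and `sInf` returns the junk value `0`. -/
noncomputable def quantile (ν : Measure ℝ) (t : ℝ) : ℝ := sInf {x | t ≤ cdf ν x}

section Quantile

variable (ν : Measure ℝ)

lemma nonempty_setOf_le_cdf {t : ℝ} (ht : t < 1) : {x | t ≤ cdf ν x}.Nonempty :=
  ((tendsto_cdf_atTop ν).eventually (eventually_ge_nhds ht)).exists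

lemma bddBelow_setOf_le_cdf {t : ℝ} (ht : 0 < t) : BddBelow {x | t ≤ cdf ν x} := by
  obtain ⟨y, hy⟩ := ((tendsto_cdf_atBot ν).eventually (eventually_lt_nhds ht)).exists
  exact ⟨y, fun x hx => le_of_not_gt fun hxy => ((monotone_cdf ν hxy.le).trans_lt hy).not_ge hx⟩

lemma quantile_le_iff {t x : ℝ} (ht : t ∈ Ioo 0 1) : quantile ν t ≤ x ↔ t ≤ cdf ν x := by
  refine ⟨fun h => ?_, fun h => csInf_le (bddBelow_setOf_le_cdf ν ht.1) h⟩
  rw [← (cdf ν).iInf_Ioi_eq x]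
  refine le_ciInf fun r => ?_
  obtain ⟨z, hz, hzr⟩ :=
    exists_lt_of_csInf_lt (nonempty_setOf_le_cdf ν ht.2) (h.trans_lt r.2)
  exact hz.trans (monotone_cdf ν hzr.le)

lemma monotoneOn_quantile : MonotoneOn (quantile ν) (Ioo 0 1) := fun _ hs _ ht hst =>
  csInf_le_csInf (bddBelow_setOf_le_cdf ν hs.1) (nonempty_setOf_le_cdf ν ht.2)
    fun _ hx => hst.trans hx

lemma aemeasurable_quantile : AEMeasurable (quantile ν) (volume.restrict (Ioo 0 1)) :=
  aemeasurable_restrict_of_monotoneOn measurableSet_Ioo (monotoneOn_quantile ν)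

variable [IsProbabilityMeasure ν]

lemma map_quantile : (volume.restrict (Ioo 0 1)).map (quantile ν) = ν := by
  refine (Measure.ext_of_Iic ν _ fun x => ?_).symm
  rw [Measure.map_apply_of_aemeasurable (aemeasurable_quantile ν) measurableSet_Iic,
    Measure.restrict_apply' measurableSet_Ioo]
  have hlevels : quantile ν ⁻¹' Iic x ∩ Ioo 0 1 = Iic (cdf ν x) ∩ Ioo 0 1 := by
    ext t
    simp only [mem_inter_iff, mem_preimage, mem_Iic, and_congr_left_iff]
    exact quantile_le_iff ν
  rw [hlevels, volume_Iic_inter_Ioo_zero_one (cdf_le_one ν x), ofReal_cdf]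

lemma volume_preimage_quantile_inter {E : Set ℝ} (hE : MeasurableSet E) :
    volume (quantile ν ⁻¹' E ∩ Ioo 0 1) = ν E := by
  conv_rhs => rw [← map_quantile ν]
  rw [Measure.map_apply_of_aemeasurable (aemeasurable_quantile ν) hE,
    Measure.restrict_apply' measurableSet_Ioo]

lemma volume_preimage_quantile_comp_inter_le {φ : ℝ ≃ᵐ ℝ} (hφ : MeasurePreserving φ)
    {I : Set ℝ} (hI : MapsTo φ I (Ioo 0 1)) {E : Set ℝ} (hE : MeasurableSet E) :
    volume ((quantile ν ∘ φ) ⁻¹' E ∩ I) ≤ ν E :=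
  calc volume ((quantile ν ∘ φ) ⁻¹' E ∩ I)
      ≤ volume (φ ⁻¹' (quantile ν ⁻¹' E ∩ Ioo 0 1)) := measure_mono fun _ ht => ⟨ht.1, hI ht.2⟩
    _ = ν E := by rw [hφ.measure_preimage_equiv, volume_preimage_quantile_inter ν hE]

lemma measureReal_Ioc_eq_max_cdf_sub (x y : ℝ) :
    ν.real (Ioc x y) = max (cdf ν y - cdf ν x) 0 := by
  have h := (cdf ν).measure_Ioc x y
  rw [measure_cdf] at h
  rw [measureReal_def, h, ENNReal.toReal_ofReal']

end Quantile

end ProbabilityTheory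

abbrev lowerQuadrant (c₁ c₂ : ℝ) : Set (Fin 2 → ℝ) := {y | y 0 ≤ c₁ ∧ y 1 ≤ c₂}

lemma measurableSet_lowerQuadrant (c₁ c₂ : ℝ) : MeasurableSet (lowerQuadrant c₁ c₂) :=
  (measurableSet_le (measurable_pi_apply 0) measurable_const).inter
    (measurableSet_le (measurable_pi_apply 1) measurable_const)

lemma measure_lowerQuadrant_le_add (μ : Measure (Fin 2 → ℝ)) (A₁ A₂ B₁ B₂ : ℝ) :
    μ (lowerQuadrant B₁ B₂) ≤ μ (lowerQuadrant A₁ A₂) + μ {y | y 0 ∈ Ioc A₁ B₁}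
      + μ {y | y 1 ∈ Ioc A₂ B₂} := by
  have hcover : lowerQuadrant B₁ B₂
      ⊆ lowerQuadrant A₁ A₂ ∪ {y | y 0 ∈ Ioc A₁ B₁} ∪ {y | y 1 ∈ Ioc A₂ B₂} := by
    rintro y ⟨hy₁, hy₂⟩
    by_cases h₁ : y 0 ≤ A₁
    · by_cases h₂ : y 1 ≤ A₂
      · exact Or.inl (Or.inl ⟨h₁, h₂⟩)
      · exact Or.inr ⟨not_le.1 h₂, hy₂⟩
    · exact Or.inl (Or.inr ⟨not_le.1 h₁, hy₁⟩)
  calc μ (lowerQuadrant B₁ B₂)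
      ≤ μ (lowerQuadrant A₁ A₂ ∪ {y | y 0 ∈ Ioc A₁ B₁} ∪ {y | y 1 ∈ Ioc A₂ B₂}) :=
        measure_mono hcover
    _ ≤ _ := (measure_union_le _ _).trans (add_le_add_left (measure_union_le _ _) _)

def MarginalsLE (μ : Measure (Fin 2 → ℝ)) (ν₁ ν₂ : Measure ℝ) : Prop :=
  ∀ E : Set ℝ, MeasurableSet E → μ {y | y 0 ∈ E} ≤ ν₁ E ∧ μ {y | y 1 ∈ E} ≤ ν₂ E

namespace MarginalsLE

variable {μ : Measure (Fin 2 → ℝ)} {ν₁ ν₂ : Measure ℝ}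

lemma measure_lowerQuadrant_le_fst (h : MarginalsLE μ ν₁ ν₂) (c₁ c₂ : ℝ) :
    μ (lowerQuadrant c₁ c₂) ≤ ν₁ (Iic c₁) :=
  (measure_mono fun _ hy => hy.1).trans (h _ measurableSet_Iic).1

lemma measure_lowerQuadrant_le_snd (h : MarginalsLE μ ν₁ ν₂) (c₁ c₂ : ℝ) :
    μ (lowerQuadrant c₁ c₂) ≤ ν₂ (Iic c₂) :=
  (measure_mono fun _ hy => hy.2).trans (h _ measurableSet_Iic).2

lemma measureReal_lowerQuadrant_le_fst [IsFiniteMeasure ν₁] (h : MarginalsLE μ ν₁ ν₂)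
    (c₁ c₂ : ℝ) : μ.real (lowerQuadrant c₁ c₂) ≤ ν₁.real (Iic c₁) :=
  ENNReal.toReal_mono (measure_ne_top _ _) (h.measure_lowerQuadrant_le_fst c₁ c₂)

lemma measureReal_lowerQuadrant_le_snd [IsFiniteMeasure ν₂] (h : MarginalsLE μ ν₁ ν₂)
    (c₁ c₂ : ℝ) : μ.real (lowerQuadrant c₁ c₂) ≤ ν₂.real (Iic c₂) :=
  ENNReal.toReal_mono (measure_ne_top _ _) (h.measure_lowerQuadrant_le_snd c₁ c₂)

lemma measureReal_lowerQuadrant_le_add [IsFiniteMeasure ν₁] [IsFiniteMeasure ν₂]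
    (h : MarginalsLE μ ν₁ ν₂) (A₁ A₂ B₁ B₂ : ℝ) :
    μ.real (lowerQuadrant B₁ B₂)
      ≤ μ.real (lowerQuadrant A₁ A₂) + ν₁.real (Ioc A₁ B₁) + ν₂.real (Ioc A₂ B₂) := by
  have hA : μ (lowerQuadrant A₁ A₂) ≠ ⊤ :=
    ne_top_of_le_ne_top (measure_ne_top ν₁ _) (h.measure_lowerQuadrant_le_fst A₁ A₂)
  have hB := (measure_lowerQuadrant_le_add μ A₁ A₂ B₁ B₂).trans
    (add_le_add (add_le_add le_rfl (h _ measurableSet_Ioc).1) (h _ measurableSet_Ioc).2)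
  rw [measureReal_def, measureReal_def, measureReal_def, measureReal_def,
    ← ENNReal.toReal_add hA (measure_ne_top _ _), ← ENNReal.toReal_add (by finiteness)
      (measure_ne_top _ _)]
  exact ENNReal.toReal_mono (by finiteness) hB

end MarginalsLE

lemma mapsTo_const_sub_add_Ioo_zero_one {a m : ℝ} (hm : m ≤ a) (ha : a ≤ 1) :
    MapsTo (fun t => a - m + t) (Ioo 0 m) (Ioo 0 1) := fun _ ht =>
  ⟨by linarith [ht.1], by linarith [ht.2]⟩

lemma mapsTo_const_sub_Ioo_zero_one {b m : ℝ} (hm : m ≤ b) (hb : b ≤ 1) :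
    MapsTo (fun t => b - t) (Ioo 0 m) (Ioo 0 1) := fun _ ht =>
  ⟨by linarith [ht.2], by linarith [ht.1]⟩

/-- The two levels sweep the top mass `m` below `B₁`, resp. `B₂`, in opposite directions. -/
noncomputable def cornerMap (ν₁ ν₂ : Measure ℝ) (B₁ B₂ m t : ℝ) : Fin 2 → ℝ :=
  ![quantile ν₁ (cdf ν₁ B₁ - m + t), quantile ν₂ (cdf ν₂ B₂ - t)]

noncomputable def cornerCoupling (ν₁ ν₂ : Measure ℝ) (B₁ B₂ m : ℝ) : Measure (Fin 2 → ℝ) :=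
  (volume.restrict (Ioo 0 m)).map (cornerMap ν₁ ν₂ B₁ B₂ m)

section CornerCoupling

variable {ν₁ ν₂ : Measure ℝ} {B₁ B₂ m : ℝ}

lemma cornerMap_zero (t : ℝ) :
    cornerMap ν₁ ν₂ B₁ B₂ m t 0 = quantile ν₁ (cdf ν₁ B₁ - m + t) := rfl

lemma cornerMap_one (t : ℝ) : cornerMap ν₁ ν₂ B₁ B₂ m t 1 = quantile ν₂ (cdf ν₂ B₂ - t) := rfl

lemma aemeasurable_cornerMap (hm₁ : m ≤ cdf ν₁ B₁) (hm₂ : m ≤ cdf ν₂ B₂) :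
    AEMeasurable (cornerMap ν₁ ν₂ B₁ B₂ m) (volume.restrict (Ioo 0 m)) := by
  have hmaps₁ := mapsTo_const_sub_add_Ioo_zero_one hm₁ (cdf_le_one ν₁ B₁)
  have hmaps₂ := mapsTo_const_sub_Ioo_zero_one hm₂ (cdf_le_one ν₂ B₂)
  refine aemeasurable_pi_iff.2 fun i => ?_
  fin_cases i
  · exact aemeasurable_restrict_of_monotoneOn measurableSet_Ioo
      ((monotoneOn_quantile ν₁).comp (fun _ _ _ _ hst => by simpa using hst) hmaps₁)
  · exact aemeasurable_restrict_of_antitoneOn measurableSet_Ioo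
      fun _ hs _ ht hst => monotoneOn_quantile ν₂ (hmaps₂ ht) (hmaps₂ hs) (sub_le_sub_left hst _)

lemma cornerCoupling_apply (hm₁ : m ≤ cdf ν₁ B₁) (hm₂ : m ≤ cdf ν₂ B₂)
    {T : Set (Fin 2 → ℝ)} (hT : MeasurableSet T) :
    cornerCoupling ν₁ ν₂ B₁ B₂ m T = volume (cornerMap ν₁ ν₂ B₁ B₂ m ⁻¹' T ∩ Ioo 0 m) := by
  rw [cornerCoupling, Measure.map_apply_of_aemeasurable (aemeasurable_cornerMap hm₁ hm₂) hT,
    Measure.restrict_apply' measurableSet_Ioo]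

lemma cornerCoupling_univ (hm₁ : m ≤ cdf ν₁ B₁) (hm₂ : m ≤ cdf ν₂ B₂) :
    cornerCoupling ν₁ ν₂ B₁ B₂ m univ = ENNReal.ofReal m := by
  rw [cornerCoupling_apply hm₁ hm₂ MeasurableSet.univ, preimage_univ, univ_inter,
    Real.volume_Ioo, sub_zero]

lemma cornerCoupling_lowerQuadrant (hm₁ : m ≤ cdf ν₁ B₁) (hm₂ : m ≤ cdf ν₂ B₂) :
    cornerCoupling ν₁ ν₂ B₁ B₂ m (lowerQuadrant B₁ B₂) = ENNReal.ofReal m := by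
  have hB : cornerMap ν₁ ν₂ B₁ B₂ m ⁻¹' lowerQuadrant B₁ B₂ ∩ Ioo 0 m = Ioo 0 m :=
    inter_eq_right.2 fun t ht =>
      ⟨(quantile_le_iff ν₁ (mapsTo_const_sub_add_Ioo_zero_one hm₁ (cdf_le_one ν₁ B₁) ht)).2
          (by linarith [ht.2]),
        (quantile_le_iff ν₂ (mapsTo_const_sub_Ioo_zero_one hm₂ (cdf_le_one ν₂ B₂) ht)).2
          (by linarith [ht.1])⟩
  rw [cornerCoupling_apply hm₁ hm₂ (measurableSet_lowerQuadrant B₁ B₂), hB, Real.volume_Ioo,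
    sub_zero]

lemma marginalsLE_cornerCoupling [IsProbabilityMeasure ν₁] [IsProbabilityMeasure ν₂]
    (hm₁ : m ≤ cdf ν₁ B₁) (hm₂ : m ≤ cdf ν₂ B₂) :
    MarginalsLE (cornerCoupling ν₁ ν₂ B₁ B₂ m) ν₁ ν₂ := fun E hE => by
  rw [cornerCoupling_apply hm₁ hm₂ (T := {y | y 0 ∈ E}) (measurable_pi_apply 0 hE),
    cornerCoupling_apply hm₁ hm₂ (T := {y | y 1 ∈ E}) (measurable_pi_apply 1 hE)]
  exact ⟨volume_preimage_quantile_comp_inter_le ν₁ (φ := MeasurableEquiv.addLeft _)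
      (measurePreserving_add_left volume _)
      (mapsTo_const_sub_add_Ioo_zero_one hm₁ (cdf_le_one ν₁ B₁)) hE,
    volume_preimage_quantile_comp_inter_le ν₂ (φ := MeasurableEquiv.subLeft _)
      (Measure.measurePreserving_sub_left volume _)
      (mapsTo_const_sub_Ioo_zero_one hm₂ (cdf_le_one ν₂ B₂)) hE⟩

lemma measureReal_cornerCoupling_lowerQuadrant_le [IsProbabilityMeasure ν₁]
    [IsProbabilityMeasure ν₂] (hm₁ : m ≤ cdf ν₁ B₁) (hm₂ : m ≤ cdf ν₂ B₂) (A₁ A₂ : ℝ) :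
    (cornerCoupling ν₁ ν₂ B₁ B₂ m).real (lowerQuadrant A₁ A₂)
      ≤ max (m - ν₁.real (Ioc A₁ B₁) - ν₂.real (Ioc A₂ B₂)) 0 := by
  have hA : cornerMap ν₁ ν₂ B₁ B₂ m ⁻¹' lowerQuadrant A₁ A₂ ∩ Ioo 0 m
      ⊆ Icc (ν₂.real (Ioc A₂ B₂)) (m - ν₁.real (Ioc A₁ B₁)) := by
    rintro t ⟨⟨h₁, h₂⟩, ht⟩
    rw [cornerMap_zero, quantile_le_iff ν₁
      (mapsTo_const_sub_add_Ioo_zero_one hm₁ (cdf_le_one ν₁ B₁) ht)] at h₁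
    rw [cornerMap_one, quantile_le_iff ν₂
      (mapsTo_const_sub_Ioo_zero_one hm₂ (cdf_le_one ν₂ B₂) ht)] at h₂
    rw [measureReal_Ioc_eq_max_cdf_sub, measureReal_Ioc_eq_max_cdf_sub]
    exact ⟨max_le (by linarith) ht.1.le,
      le_sub_comm.1 (max_le (by linarith) (by linarith [ht.2]))⟩
  rw [measureReal_def, cornerCoupling_apply hm₁ hm₂ (measurableSet_lowerQuadrant A₁ A₂),
    ← measureReal_def, ← Real.volume_real_Icc]
  exact measureReal_mono hA measure_Icc_lt_top.ne

end CornerCoupling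

lemma mem_lowerBounds_insert_insert_range {ι : Sort*} {x y v : ℝ} {f : ι → ℝ} :
    v ∈ lowerBounds (insert x (insert y (range f))) ↔ v ≤ x ∧ v ≤ y ∧ ∀ i, v ≤ f i := by
  simp [mem_lowerBounds]

/-- Explicit box duality in dimension 2 with finitely many constraints:
`max_{μ ∈ Q₀} μ(B) = min(ν₁((−∞,B₁]), ν₂((−∞,B₂]), min_i {π̄^i + ν₁((A₁^i,B₁]) + ν₂((A₂^i,B₂])})`. -/
theorem box_duality_dim_two {n : ℕ}
    (ν₁ ν₂ : Measure ℝ) [IsProbabilityMeasure ν₁] [IsProbabilityMeasure ν₂]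
    (B₁ B₂ : ℝ) (A₁ A₂ : Fin n → ℝ) (πhi : Fin n → ℝ)
    (hπ : ∀ i, πhi i ∈ Set.Icc (0 : ℝ) 1) :
    IsGreatest
      {v : ℝ | ∃ μ : Measure (Fin 2 → ℝ), μ Set.univ ≤ 1 ∧
        (∀ E : Set ℝ, MeasurableSet E →
          μ {y : Fin 2 → ℝ | y 0 ∈ E} ≤ ν₁ E ∧ μ {y : Fin 2 → ℝ | y 1 ∈ E} ≤ ν₂ E) ∧
        (∀ i, (μ {y : Fin 2 → ℝ | y 0 ≤ A₁ i ∧ y 1 ≤ A₂ i}).toReal ≤ πhi i) ∧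
        v = (μ {y : Fin 2 → ℝ | y 0 ≤ B₁ ∧ y 1 ≤ B₂}).toReal}
      (sInf (insert ((ν₁ (Set.Iic B₁)).toReal)
        (insert ((ν₂ (Set.Iic B₂)).toReal)
          (Set.range fun i =>
            πhi i + (ν₁ (Set.Ioc (A₁ i) B₁)).toReal + (ν₂ (Set.Ioc (A₂ i) B₂)).toReal)))) := by
  simp only [← measureReal_def]
  set S := insert (ν₁.real (Iic B₁)) (insert (ν₂.real (Iic B₂))
    (range fun i => πhi i + ν₁.real (Ioc (A₁ i) B₁) + ν₂.real (Ioc (A₂ i) B₂)))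
  have hglb : IsGLB S (sInf S) :=
    isGLB_csInf (insert_nonempty _ _) (((finite_range _).insert _).insert _).bddBelow
  obtain ⟨hm₁, hm₂, hmi⟩ := mem_lowerBounds_insert_insert_range.1 hglb.1
  rw [← cdf_eq_real] at hm₁ hm₂
  have hm0 : 0 ≤ sInf S := hglb.2 (mem_lowerBounds_insert_insert_range.2
    ⟨measureReal_nonneg, measureReal_nonneg, fun i => by
      have := (hπ i).1; positivity⟩)
  refine ⟨⟨cornerCoupling ν₁ ν₂ B₁ B₂ (sInf S), ?_, marginalsLE_cornerCoupling hm₁ hm₂,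
    fun i => ?_, ?_⟩, ?_⟩
  · rw [cornerCoupling_univ hm₁ hm₂]
    exact ENNReal.ofReal_le_one.2 (hm₁.trans (cdf_le_one ν₁ B₁))
  · exact (measureReal_cornerCoupling_lowerQuadrant_le hm₁ hm₂ _ _).trans
      (max_le (by linarith [hmi i]) (hπ i).1)
  · rw [measureReal_def, cornerCoupling_lowerQuadrant hm₁ hm₂, ENNReal.toReal_ofReal hm0]
  · rintro _ ⟨μ, -, hmarg : MarginalsLE μ ν₁ ν₂, hA, rfl⟩
    refine hglb.2 (mem_lowerBounds_insert_insert_range.2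
      ⟨hmarg.measureReal_lowerQuadrant_le_fst B₁ B₂,
        hmarg.measureReal_lowerQuadrant_le_snd B₁ B₂, fun i => ?_⟩)
    linarith [hmarg.measureReal_lowerQuadrant_le_add (A₁ i) (A₂ i) B₁ B₂, hA i]
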